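/- arXiv:1210.3339 — 2 statements merged into one kernel-verified Lean document; each statement's English description precedes it below -/
import Mathlib

section
/- Let χ((i,j)) = (i-1)(j-1). A sequence of vectors (0,0), (a1,b1), (a2,b2), (a3,b3) in ℤ² (with (a0,b0)=(0,0)) satisfies χ((ai,bi)-(aj,bj)) = 0 for all 0 ≤ i < j ≤ 3 if and only if, for some c ∈ ℤ, it belongs to one of four families: (I_c): (0,0),(-1,0),(c-1,-1),(c-2,-1); (II_c): (0,0),(0,-1),(-1,c-1),(-1,c-2); (III_c): (0,0),(-1,c),(-1,c-1),(-2,-1); (IV_c): (0,0),(c,-1),(c-1,-1),(-1,-2). -/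
/-- Euler characteristic of the line bundle `O(i,j)` on the Beauville surface:
`χ(i,j) = (i-1)(j-1)` (Riemann–Roch). -/
def chiB (v : ℤ × ℤ) : ℤ := (v.1 - 1) * (v.2 - 1)

/-- A sequence `(0,0), L1, L2, L3` in `ℤ²` is numerically exceptional
(`χ(Li - Lj) = 0` for all `0 ≤ i < j ≤ 3`) iff it belongs to one of the four
families `I_c`, `II_c`, `III_c`, `IV_c`. -/
theorem stmt_0 (L1 L2 L3 : ℤ × ℤ) :
    (chiB (0 - L1) = 0 ∧ chiB (0 - L2) = 0 ∧ chiB (0 - L3) = 0 ∧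
     chiB (L1 - L2) = 0 ∧ chiB (L1 - L3) = 0 ∧ chiB (L2 - L3) = 0) ↔
    (∃ c : ℤ,
      (L1 = (-1, 0) ∧ L2 = (c - 1, -1) ∧ L3 = (c - 2, -1)) ∨
      (L1 = (0, -1) ∧ L2 = (-1, c - 1) ∧ L3 = (-1, c - 2)) ∨
      (L1 = (-1, c) ∧ L2 = (-1, c - 1) ∧ L3 = (-2, -1)) ∨
      (L1 = (c, -1) ∧ L2 = (c - 1, -1) ∧ L3 = (-1, -2))) := by
  obtain ⟨a1, b1⟩ := L1
  obtain ⟨a2, b2⟩ := L2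
  obtain ⟨a3, b3⟩ := L3
  simp only [chiB, Prod.mk_sub_mk, Prod.fst_sub, Prod.snd_sub, Prod.fst_zero, Prod.snd_zero,
    mul_eq_zero, sub_eq_zero, Prod.mk.injEq, Prod.ext_iff]
  constructor
  · rintro ⟨h1 | h1, h2 | h2, h3 | h3, h4 | h4, h5 | h5, h6 | h6⟩ <;>
      first
        | exact ⟨a2 + 1, by omega⟩
        | exact ⟨b2 + 1, by omega⟩
        | exact ⟨b1, by omega⟩
        | exact ⟨a1, by omega⟩
  · rintro ⟨c, h⟩
    rcases h with ⟨⟨h1,h2⟩,⟨h3,h4⟩,h5,h6⟩ | ⟨⟨h1,h2⟩,⟨h3,h4⟩,h5,h6⟩ |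
      ⟨⟨h1,h2⟩,⟨h3,h4⟩,h5,h6⟩ | ⟨⟨h1,h2⟩,⟨h3,h4⟩,h5,h6⟩ <;> omega
end

section
/- In R = ℤ[q,x,y]/(x⁵-1,y⁵-1), with P = x⁴y³ + x³y⁴ + x³y³ + q(x²y² + x²y + xy²) (the character polynomial of H*(C, K_C(1))) and Q' = x²y³ + xy⁴ + x⁴ + x³ + y² + y + q (the character polynomial of H*(C', K_{C'}(2))), the monomials xⁱyʲ not appearing in P·Q' (in any q-degree) are exactly those with (i,j) ∈ {(0,0), (0,3), (0,4), (1,0), (2,0), (3,2), (4,1)}. -/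
open AddMonoidAlgebra Polynomial

/-- The ring `ℤ[q,x,y]/(x⁵-1, y⁵-1)`, realized as the group algebra of `(ℤ/5)²`
over `ℤ[q]`: a monomial `qᵏ xⁱ yʲ` is `single (i,j) qᵏ`, and the coefficient of
`xⁱ yʲ` (as a polynomial in `q`) is evaluation at `(i,j)`. -/
abbrev RB := AddMonoidAlgebra (Polynomial ℤ) (ZMod 5 × ZMod 5)

/-- `P = [H*(C, K_C(1))] = x⁴y³ + x³y⁴ + x³y³ + q(x²y² + x²y + xy²)`. -/
noncomputable def PB : RB :=
  AddMonoidAlgebra.single (4, 3) 1 + AddMonoidAlgebra.single (3, 4) 1 +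
  AddMonoidAlgebra.single (3, 3) 1 + AddMonoidAlgebra.single (2, 2) X +
  AddMonoidAlgebra.single (2, 1) X + AddMonoidAlgebra.single (1, 2) X

/-- `Q' = [H*(C', K_{C'}(2))] = x²y³ + xy⁴ + x⁴ + x³ + y² + y + q`. -/
noncomputable def Q'B : RB :=
  AddMonoidAlgebra.single (2, 3) 1 + AddMonoidAlgebra.single (1, 4) 1 +
  AddMonoidAlgebra.single (4, 0) 1 + AddMonoidAlgebra.single (3, 0) 1 +
  AddMonoidAlgebra.single (0, 2) 1 + AddMonoidAlgebra.single (0, 1) 1 +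
  AddMonoidAlgebra.single (0, 0) X

/-! All coefficients of `P` and `Q'` lie in `ℕ[q]`. Over `ℕ[q]`, which has no zero divisors and
no nonzero additive units, nothing cancels in a product of the group algebra, so the support of
`P·Q'` is the sumset of the supports of `P` and `Q'`; its complement in `(ℤ/5)²` is then a finite
computation. -/

open scoped Pointwise

instance Polynomial.subsingleton_addUnits {R : Type*} [Semiring R] [Subsingleton (AddUnits R)] :
    Subsingleton (AddUnits R[X]) :=
  Subsingleton.addUnits_of_isAddUnit fun p ⟨u, hu⟩ ↦ by
    ext n
    have := congrArg (coeff · n) u.val_neg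
    simp only [coeff_add, coeff_zero, add_eq_zero, hu] at this
    simpa using this.1

namespace AddMonoidAlgebra

variable {R G : Type*} [Semiring R] [Subsingleton (AddUnits R)] [AddMonoid G] [DecidableEq G]

theorem support_coeff_add (f g : R[G]) :
    (f + g).coeff.support = f.coeff.support ∪ g.coeff.support := by
  ext m
  simp only [Finsupp.mem_support_iff, coeff_add, Finsupp.add_apply, Finset.mem_union, ne_eq,
    add_eq_zero]
  tauto

theorem support_coeff_mul [NoZeroDivisors R] (f g : R[G]) :
    (f * g).coeff.support = f.coeff.support + g.coeff.support := by
  ext m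
  rw [← not_iff_not, Finsupp.notMem_support_iff, coeff_mul]
  simp only [Finsupp.sum, Finset.sum_eq_zero_iff, Finset.mem_add, Finsupp.mem_support_iff]
  push Not
  refine forall₂_congr fun a ha ↦ forall₂_congr fun b hb ↦ ?_
  simp [ha, hb]

end AddMonoidAlgebra

section Coefficients

variable (R : Type*) [Semiring R]

noncomputable def PBOver : AddMonoidAlgebra R[X] (ZMod 5 × ZMod 5) :=
  single (4, 3) 1 + single (3, 4) 1 + single (3, 3) 1 + single (2, 2) X + single (2, 1) X +
    single (1, 2) X

noncomputable def Q'BOver : AddMonoidAlgebra R[X] (ZMod 5 × ZMod 5) :=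
  single (2, 3) 1 + single (1, 4) 1 + single (4, 0) 1 + single (3, 0) 1 + single (0, 2) 1 +
    single (0, 1) 1 + single (0, 0) X

variable {R} {S : Type*} [Semiring S]

theorem map_PBOver (f : R →+* S) :
    mapRingHom _ (Polynomial.mapRingHom f) (PBOver R) = PBOver S := by
  simp [PBOver]

theorem map_Q'BOver (f : R →+* S) :
    mapRingHom _ (Polynomial.mapRingHom f) (Q'BOver R) = Q'BOver S := by
  simp [Q'BOver]

end Coefficients

theorem PB_eq_map_PBOver_nat :
    PB = mapRingHom _ (Polynomial.mapRingHom (Nat.castRingHom ℤ)) (PBOver ℕ) :=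
  (map_PBOver _).symm

theorem Q'B_eq_map_Q'BOver_nat :
    Q'B = mapRingHom _ (Polynomial.mapRingHom (Nat.castRingHom ℤ)) (Q'BOver ℕ) :=
  (map_Q'BOver _).symm

theorem support_coeff_PBOver_nat :
    (PBOver ℕ).coeff.support = {(4, 3), (3, 4), (3, 3), (2, 2), (2, 1), (1, 2)} := by
  simp only [PBOver, support_coeff_add, coeff_single, Finsupp.support_single _ one_ne_zero,
    Finsupp.support_single _ X_ne_zero]
  decide

theorem support_coeff_Q'BOver_nat :
    (Q'BOver ℕ).coeff.support = {(2, 3), (1, 4), (4, 0), (3, 0), (0, 2), (0, 1), (0, 0)} := by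
  simp only [Q'BOver, support_coeff_add, coeff_single, Finsupp.support_single _ one_ne_zero,
    Finsupp.support_single _ X_ne_zero]
  decide

/-- The monomials `xⁱyʲ` not occurring in `P·Q'` (in any `q`-degree) are exactly
those with `(i,j) ∈ {(0,0),(0,3),(0,4),(1,0),(2,0),(3,2),(4,1)}`; this computes
the acyclic set `A(K(1,2))` on the Beauville surface. -/
theorem stmt_12 (ij : ZMod 5 × ZMod 5) :
    (PB * Q'B).coeff ij = 0 ↔
      ij ∈ ({(0, 0), (0, 3), (0, 4), (1, 0), (2, 0), (3, 2), (4, 1)} :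
        Set (ZMod 5 × ZMod 5)) := by
  rw [PB_eq_map_PBOver_nat, Q'B_eq_map_Q'BOver_nat, ← map_mul, coeff_mapRingHom,
    Polynomial.coe_mapRingHom, Polynomial.map_eq_zero_iff Nat.cast_injective,
    ← Finsupp.notMem_support_iff, support_coeff_mul, support_coeff_PBOver_nat, support_coeff_Q'BOver_nat]
  revert ij
  decide
end
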